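/- Let μ and ν be strictly positive functions on a finite nonempty set 𝒵 with μ(z) ≤ ν(z) for all z ∈ 𝒵. If D_KL(μ‖ν) ≤ ‖μ‖₁, then D_KL(μ‖ν) ≥ ‖μ − ν‖₁² / (7‖μ‖₁). -/

import Mathlib

/-!
With `A = ‖μ‖₁`, `B = ‖ν‖₁` and `‖μ - ν‖₁ = B - A`, two lower bounds on `D_KL(μ‖ν)` are
combined. Pointwise `b·klFun(a/b) ≥ (b - a)²/(2b)` for `a ≤ b`, which by Sedrakyan's lemma gives
`D_KL(μ‖ν) ≥ (B - A)²/(2B)`. The log-sum inequality gives `D_KL(μ‖ν) ≥ B·klFun(A/B)`, so the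
hypothesis forces `klFun(A/B) ≤ A/B`; since `t log t ≥ -1/e`, this means `A/B ≥ 2/7`, i.e.
`2B ≤ 7A`.
-/

open scoped BigOperators

/-- Unnormalized Kullback–Leibler divergence of two positive vectors on a finite set. -/
noncomputable def KLdiv {Z : Type*} [Fintype Z] (α β : Z → ℝ) : ℝ :=
  (∑ z, (β z - α z)) + ∑ z, α z * Real.log (α z / β z)

/-- ℓ¹ norm of a vector on a finite set. -/
noncomputable def l1 {Z : Type*} [Fintype Z] (v : Z → ℝ) : ℝ := ∑ z, |v z|

open Real InformationTheory Finset

lemma neg_exp_neg_one_le_mul_log {t : ℝ} (ht : 0 < t) : -exp (-1) ≤ t * log t := by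
  have h := add_one_le_exp (-(log t + 1))
  rw [neg_add, exp_add, exp_neg (log t), exp_log ht] at h
  have := mul_le_mul_of_nonneg_left h ht.le
  rw [mul_add, mul_one, ← mul_assoc, mul_inv_cancel₀ ht.ne'] at this
  linarith

lemma sq_one_sub_div_two_le_klFun {x : ℝ} (hx₀ : 0 < x) (hx₁ : x ≤ 1) :
    (1 - x) ^ 2 / 2 ≤ klFun x := by
  have h := self_le_sinh_iff.mpr (log_nonneg (one_le_inv₀ hx₀ |>.mpr hx₁))
  rw [sinh_log (inv_pos.mpr hx₀), log_inv, inv_inv] at h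
  have := mul_le_mul_of_nonneg_left h hx₀.le
  rw [klFun_apply]
  field_simp at this ⊢
  nlinarith

lemma two_div_seven_le_of_klFun_le {t : ℝ} (ht : 0 < t) (h : klFun t ≤ t) : 2 / 7 ≤ t := by
  have he : exp (-1) < 3 / 7 := by
    rw [exp_neg, inv_lt_comm₀ (exp_pos 1) (by norm_num)]
    linarith [exp_one_gt_d9]
  rw [klFun_apply] at h
  linarith [neg_exp_neg_one_le_mul_log ht]

lemma KLdiv_eq_sum_mul_klFun {Z : Type*} [Fintype Z] (μ ν : Z → ℝ) (hν : ∀ z, ν z ≠ 0) :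
    KLdiv μ ν = ∑ z, ν z * klFun (μ z / ν z) := by
  rw [KLdiv, ← sum_add_distrib]
  refine sum_congr rfl fun z _ => ?_
  have hνz := hν z
  rw [klFun_apply]
  field_simp
  ring

/-- The log-sum inequality: Jensen's inequality for `klFun` with weights `ν`. -/
lemma sum_mul_klFun_sum_div_sum_le_KLdiv {Z : Type*} [Fintype Z] [Nonempty Z] (μ ν : Z → ℝ)
    (hμ : ∀ z, 0 ≤ μ z) (hν : ∀ z, 0 < ν z) :
    (∑ z, ν z) * klFun ((∑ z, μ z) / ∑ z, ν z) ≤ KLdiv μ ν := by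
  have hB : 0 < ∑ z, ν z := sum_pos (fun z _ => hν z) univ_nonempty
  have jensen := convexOn_klFun.map_centerMass_le (t := univ) (w := ν) (p := fun z => μ z / ν z)
    (fun z _ => (hν z).le) hB (fun z _ => div_nonneg (hμ z) (hν z).le)
  simp only [centerMass, smul_eq_mul, Function.comp_apply] at jensen
  rw [KLdiv_eq_sum_mul_klFun μ ν fun z => (hν z).ne']
  have hsum : ∑ z, ν z * (μ z / ν z) = ∑ z, μ z :=
    sum_congr rfl fun z _ => mul_div_cancel₀ _ (hν z).ne'
  rw [hsum, ← div_eq_inv_mul] at jensen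
  rwa [le_inv_mul_iff₀ hB] at jensen

lemma sq_sum_sub_div_le_KLdiv {Z : Type*} [Fintype Z] (μ ν : Z → ℝ) (hμ : ∀ z, 0 < μ z)
    (hle : ∀ z, μ z ≤ ν z) :
    (∑ z, (ν z - μ z)) ^ 2 / (2 * ∑ z, ν z) ≤ KLdiv μ ν := by
  have hν : ∀ z, 0 < ν z := fun z => (hμ z).trans_le (hle z)
  calc (∑ z, (ν z - μ z)) ^ 2 / (2 * ∑ z, ν z)
      = (∑ z, (ν z - μ z)) ^ 2 / ∑ z, 2 * ν z := by rw [mul_sum]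
    _ ≤ ∑ z, (ν z - μ z) ^ 2 / (2 * ν z) :=
        sq_sum_div_le_sum_sq_div _ _ fun z _ => by linarith [hν z]
    _ ≤ ∑ z, ν z * klFun (μ z / ν z) := by
        refine sum_le_sum fun z _ => ?_
        have h := sq_one_sub_div_two_le_klFun (div_pos (hμ z) (hν z))
          ((div_le_one (hν z)).mpr (hle z))
        have hνz := hν z
        calc (ν z - μ z) ^ 2 / (2 * ν z) = ν z * ((1 - μ z / ν z) ^ 2 / 2) := by
              field_simp
          _ ≤ _ := mul_le_mul_of_nonneg_left h hνz.le
    _ = KLdiv μ ν := (KLdiv_eq_sum_mul_klFun μ ν fun z => (hν z).ne').symm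

theorem stmt6_general {Z : Type*} [Fintype Z] [Nonempty Z] (μ ν : Z → ℝ)
    (hμ : ∀ z, 0 < μ z) (hle : ∀ z, μ z ≤ ν z)
    (h : KLdiv μ ν ≤ l1 μ) :
    KLdiv μ ν ≥ (l1 (fun z => μ z - ν z)) ^ 2 / (7 * l1 μ) := by
  have hν : ∀ z, 0 < ν z := fun z => (hμ z).trans_le (hle z)
  set A := ∑ z, μ z
  set B := ∑ z, ν z
  have hA : 0 < A := sum_pos (fun z _ => hμ z) univ_nonempty
  have hB : 0 < B := sum_pos (fun z _ => hν z) univ_nonempty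
  have hl1μ : l1 μ = A := sum_congr rfl fun z _ => abs_of_pos (hμ z)
  have hl1 : l1 (fun z => μ z - ν z) = ∑ z, (ν z - μ z) :=
    sum_congr rfl fun z _ => by rw [abs_sub_comm, abs_of_nonneg (sub_nonneg.mpr (hle z))]
  have hklFun : klFun (A / B) ≤ A / B := by
    have := (sum_mul_klFun_sum_div_sum_le_KLdiv μ ν (fun z => (hμ z).le) hν).trans (hl1μ ▸ h)
    rwa [← le_div_iff₀' hB] at this
  have hBA : 2 * B ≤ 7 * A := by
    have := two_div_seven_le_of_klFun_le (div_pos hA hB) hklFun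
    rw [div_le_div_iff₀ (by norm_num) hB] at this
    linarith
  rw [hl1μ, hl1, ge_iff_le]
  exact (div_le_div_of_nonneg_left (sq_nonneg _) (by positivity) hBA).trans
    (sq_sum_sub_div_le_KLdiv μ ν hμ hle)

/-- Let `μ, ν` be strictly positive on a finite nonempty set with `μ ≤ ν`.
If `D_KL(μ‖ν) ≤ ‖μ‖₁` then `D_KL(μ‖ν) ≥ ‖μ − ν‖₁² / (7‖μ‖₁)`. -/
theorem stmt6 {Z : Type*} [Fintype Z] [Nonempty Z] (μ ν : Z → ℝ)
    (hμ : ∀ z, 0 < μ z) (hν : ∀ z, 0 < ν z) (hle : ∀ z, μ z ≤ ν z)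
    (h : KLdiv μ ν ≤ l1 μ) :
    KLdiv μ ν ≥ (l1 (fun z => μ z - ν z)) ^ 2 / (7 * l1 μ) :=
  stmt6_general μ ν hμ hle h
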